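/- Let 0 < ε ≤ θ/2. Suppose a red/blue coloring of the edges of K_N with vertex set V admits a partition V = A₁ ⊔ ⋯ ⊔ A_ℓ ⊔ A_{ℓ+1} such that for each i ≤ ℓ the pair (A_i, V) is (1/2, ε)-regular in the blue graph, and |A_{ℓ+1}| ≤ εN. Then the coloring is θ-quasirandom. -/

import Mathlib

/-- Number of pairs of distinct vertices in `X × Y` joined by an edge of color `c`
(`false` = red, `true` = blue). -/
noncomputable def colorCount {N : ℕ} (χ : Fin N → Fin N → Bool) (c : Bool)
    (X Y : Finset (Fin N)) : ℕ :=
  {p : Fin N × Fin N | p.1 ∈ X ∧ p.2 ∈ Y ∧ p.1 ≠ p.2 ∧ χ p.1 p.2 = c}.ncard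

/-- Density of color-`c` edges between `X` and `Y`. -/
noncomputable def colorDens {N : ℕ} (χ : Fin N → Fin N → Bool) (c : Bool)
    (X Y : Finset (Fin N)) : ℝ :=
  (colorCount χ c X Y : ℝ) / ((X.card : ℝ) * (Y.card : ℝ))

/-- The pair `(X, Y)` is `(p, ε)`-regular in color `c`. -/
def PairPReg {N : ℕ} (χ : Fin N → Fin N → Bool) (c : Bool) (p ε : ℝ)
    (X Y : Finset (Fin N)) : Prop :=
  ∀ X' ⊆ X, ∀ Y' ⊆ Y, ε * (X.card : ℝ) ≤ (X'.card : ℝ) → ε * (Y.card : ℝ) ≤ (Y'.card : ℝ) →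
    |colorDens χ c X' Y' - p| ≤ ε

/-- A red/blue edge coloring of `K_N` is `θ`-quasirandom if, for every pair of disjoint
vertex subsets `X`, `Y`, the number of blue edges between them deviates from `|X||Y|/2`
by at most `θ N²`. -/
def Quasirandom {N : ℕ} (χ : Fin N → Fin N → Bool) (θ : ℝ) : Prop :=
  ∀ X Y : Finset (Fin N), Disjoint X Y →
    |(colorCount χ true X Y : ℝ) - (X.card : ℝ) * (Y.card : ℝ) / 2| ≤ θ * (N : ℝ) ^ 2

/-! The discrepancy `disc(S) = e_c(S, Y) - p|S||Y|` is additive in `S`. Split `X` along the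
partition: a piece `X ∩ Aᵢ` is either of size at least `ε|Aᵢ|`, and then regularity of `(Aᵢ, V)`
bounds its discrepancy by `ε|X ∩ Aᵢ||Y|`, or smaller, and then the trivial bound `|X ∩ Aᵢ||Y|`
suffices; either way it contributes at most `ε|Aᵢ|N`. The rest of `X` lies in the exceptional set
and contributes at most `εN²`, for a total of `2εN² ≤ θN²`. If `|Y| < εN`, the trivial bound
`|X||Y| ≤ εN²` already suffices. -/

open Finset Function

noncomputable def colorDisc {N : ℕ} (χ : Fin N → Fin N → Bool) (c : Bool) (p : ℝ)
    (X Y : Finset (Fin N)) : ℝ :=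
  colorCount χ c X Y - p * (#X * #Y)

section

variable {N : ℕ} (χ : Fin N → Fin N → Bool) (c : Bool)

lemma cast_card_le_fin (s : Finset (Fin N)) : (#s : ℝ) ≤ N := by
  exact_mod_cast card_le_univ s |>.trans_eq (Fintype.card_fin N)

lemma colorCount_eq_sum (X Y : Finset (Fin N)) :
    colorCount χ c X Y = ∑ x ∈ X, #{y ∈ Y | x ≠ y ∧ χ x y = c} := by
  have hset : {p : Fin N × Fin N | p.1 ∈ X ∧ p.2 ∈ Y ∧ p.1 ≠ p.2 ∧ χ p.1 p.2 = c}
      = ↑{p ∈ X ×ˢ Y | p.1 ≠ p.2 ∧ χ p.1 p.2 = c} := by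
    ext; simp [and_assoc]
  rw [colorCount, hset, Set.ncard_coe_finset, card_filter, sum_product]
  simp only [card_filter]

lemma colorCount_le_card_mul_card (X Y : Finset (Fin N)) :
    (colorCount χ c X Y : ℝ) ≤ #X * #Y := by
  have h : colorCount χ c X Y ≤ #X * #Y := by
    rw [colorCount_eq_sum, ← smul_eq_mul, ← sum_const]
    exact sum_le_sum fun _ _ => card_filter_le _ _
  exact_mod_cast h

lemma colorDens_mul_card_mul_card (X Y : Finset (Fin N)) :
    colorDens χ c X Y * (#X * #Y) = colorCount χ c X Y := by
  by_cases h : (#X * #Y : ℝ) = 0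
  · have := colorCount_le_card_mul_card χ c X Y
    rw [h] at this ⊢
    linarith [(colorCount χ c X Y).cast_nonneg (α := ℝ)]
  · exact div_mul_cancel₀ _ h

lemma colorDisc_eq_sum (p : ℝ) (X Y : Finset (Fin N)) :
    colorDisc χ c p X Y = ∑ x ∈ X, colorDisc χ c p {x} Y := by
  simp only [colorDisc, colorCount_eq_sum, sum_singleton, card_singleton, sum_sub_distrib,
    Nat.cast_sum, Nat.cast_one, sum_const, nsmul_eq_mul]
  ring

lemma colorDisc_eq_mul (p : ℝ) (X Y : Finset (Fin N)) :
    colorDisc χ c p X Y = (colorDens χ c X Y - p) * (#X * #Y) := by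
  rw [colorDisc, sub_mul, colorDens_mul_card_mul_card]

variable {χ c} {p : ℝ}

lemma abs_colorDisc_le (hp0 : 0 ≤ p) (hp1 : p ≤ 1) (X Y : Finset (Fin N)) :
    |colorDisc χ c p X Y| ≤ #X * #Y := by
  have hcount := colorCount_le_card_mul_card χ c X Y
  have hXY : (0 : ℝ) ≤ #X * #Y := by positivity
  rw [colorDisc, abs_le]
  constructor <;> nlinarith [(colorCount χ c X Y).cast_nonneg (α := ℝ)]

lemma abs_colorDisc_le_of_pairPReg {ε : ℝ} (hp0 : 0 ≤ p) (hp1 : p ≤ 1) (hε : 0 ≤ ε)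
    {A S Y : Finset (Fin N)} (hreg : PairPReg χ c p ε A univ) (hSA : S ⊆ A)
    (hY : ε * N ≤ #Y) :
    |colorDisc χ c p S Y| ≤ ε * #A * N := by
  have hYN := cast_card_le_fin Y
  by_cases hS : ε * #A ≤ #S
  · have hdens := hreg S hSA Y (subset_univ Y) hS (by rwa [card_univ, Fintype.card_fin])
    calc |colorDisc χ c p S Y| = |colorDens χ c S Y - p| * (#S * #Y) := by
          rw [colorDisc_eq_mul, abs_mul, abs_of_nonneg (by positivity : (0 : ℝ) ≤ #S * #Y)]
      _ ≤ ε * (#S * #Y) := by gcongr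
      _ ≤ ε * (#A * N) := by gcongr
      _ = ε * #A * N := by ring
  · calc |colorDisc χ c p S Y| ≤ #S * #Y := abs_colorDisc_le hp0 hp1 S Y
      _ ≤ ε * #A * N := by gcongr; linarith

lemma colorDisc_eq_sum_inter_add_sdiff {ι : Type*} [Fintype ι] (A : ι → Finset (Fin N))
    (hdisj : Pairwise (Disjoint on A)) (X Y : Finset (Fin N)) :
    colorDisc χ c p X Y
      = ∑ i, colorDisc χ c p (X ∩ A i) Y + colorDisc χ c p (X \ univ.biUnion A) Y := by
  have hdisjX : ((univ : Finset ι) : Set ι).PairwiseDisjoint (fun i => X ∩ A i) :=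
    fun i _ j _ hij => (hdisj hij).mono inter_subset_right inter_subset_right
  simp only [colorDisc_eq_sum χ c p (X ∩ _), colorDisc_eq_sum χ c p (X \ _)]
  rw [← sum_biUnion hdisjX, ← inter_biUnion, sum_inter_add_sum_sdiff, colorDisc_eq_sum]

lemma sum_card_le_of_pairwise_disjoint {ι : Type*} [Fintype ι] (A : ι → Finset (Fin N))
    (hdisj : Pairwise (Disjoint on A)) :
    ∑ i, (#(A i) : ℝ) ≤ N := by
  rw [← Nat.cast_sum, ← card_biUnion fun i _ j _ hij => hdisj hij]
  exact cast_card_le_fin _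

theorem abs_colorDisc_le_of_partition {ι : Type*} [Fintype ι] {ε : ℝ} (hp0 : 0 ≤ p)
    (hp1 : p ≤ 1) (hε : 0 ≤ ε) (A : ι → Finset (Fin N)) (Aend : Finset (Fin N))
    (hdisj : Pairwise (Disjoint on A)) (hcover : ∀ v, v ∈ Aend ∨ ∃ i, v ∈ A i)
    (hreg : ∀ i, PairPReg χ c p ε (A i) univ) (hsmall : (#Aend : ℝ) ≤ ε * N)
    (X Y : Finset (Fin N)) :
    |colorDisc χ c p X Y| ≤ 2 * ε * N ^ 2 := by
  have hYN := cast_card_le_fin Y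
  by_cases hY : ε * N ≤ #Y
  · have hrest : X \ univ.biUnion A ⊆ Aend := fun v hv => by
      have hv' : ¬ ∃ i, v ∈ A i := by simpa using (mem_sdiff.1 hv).2
      exact (hcover v).resolve_right hv'
    have hAN := sum_card_le_of_pairwise_disjoint A hdisj
    calc |colorDisc χ c p X Y|
        ≤ ∑ i, |colorDisc χ c p (X ∩ A i) Y| + |colorDisc χ c p (X \ univ.biUnion A) Y| := by
          rw [colorDisc_eq_sum_inter_add_sdiff A hdisj]
          exact (abs_add_le _ _).trans (by gcongr; exact abs_sum_le_sum_abs _ _)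
      _ ≤ ∑ i, ε * #(A i) * N + #(X \ univ.biUnion A) * #Y := by
          gcongr with i
          · exact abs_colorDisc_le_of_pairPReg hp0 hp1 hε (hreg i) inter_subset_right hY
          · exact abs_colorDisc_le hp0 hp1 _ _
      _ ≤ ε * N * N + ε * N * N := by
          rw [← sum_mul, ← mul_sum]
          have hrest_card : (#(X \ univ.biUnion A) : ℝ) ≤ #Aend := by
            exact_mod_cast card_le_card hrest
          gcongr
          exact hrest_card.trans hsmall
      _ = 2 * ε * N ^ 2 := by ring
  · calc |colorDisc χ c p X Y| ≤ #X * #Y := abs_colorDisc_le hp0 hp1 X Y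
      _ ≤ N * (ε * N) :=
          mul_le_mul (cast_card_le_fin X) (not_le.1 hY).le (by positivity) (by positivity)
      _ ≤ 2 * ε * N ^ 2 := by nlinarith

end

theorem quasirandom_of_partition_general (N : ℕ) (χ : Fin N → Fin N → Bool)
    (θ ε : ℝ) (hε0 : 0 < ε) (hεθ : ε ≤ θ / 2)
    (ℓ : ℕ) (A : Fin ℓ → Finset (Fin N)) (Aend : Finset (Fin N))
    (hdisj : ∀ i j, i ≠ j → Disjoint (A i) (A j))
    (hcover : ∀ v : Fin N, v ∈ Aend ∨ ∃ i, v ∈ A i)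
    (hreg : ∀ i, PairPReg χ true (1 / 2) ε (A i) Finset.univ)
    (hsmall : (Aend.card : ℝ) ≤ ε * N) :
    Quasirandom χ θ := by
  intro X Y _
  have hdisc := abs_colorDisc_le_of_partition (by norm_num) (by norm_num) hε0.le A Aend
    hdisj hcover hreg hsmall X Y
  have hθ : 2 * ε * (N : ℝ) ^ 2 ≤ θ * N ^ 2 := by gcongr; linarith
  calc |(colorCount χ true X Y : ℝ) - #X * #Y / 2| = |colorDisc χ true (1 / 2) X Y| := by
        rw [colorDisc]; ring_nf
    _ ≤ θ * N ^ 2 := hdisc.trans hθ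

/-- If the vertex set can be partitioned into parts `A₁, …, A_ℓ`, each `(1/2, ε)`-regular
to the whole vertex set, together with one further part of at most `εN` vertices, then
the coloring is `θ`-quasirandom, provided `ε ≤ θ/2`. -/
theorem quasirandom_of_partition (N : ℕ) (χ : Fin N → Fin N → Bool)
    (hsym : ∀ u v, χ u v = χ v u)
    (θ ε : ℝ) (hε0 : 0 < ε) (hεθ : ε ≤ θ / 2)
    (ℓ : ℕ) (A : Fin ℓ → Finset (Fin N)) (Aend : Finset (Fin N))
    (hdisj : ∀ i j, i ≠ j → Disjoint (A i) (A j))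
    (hdisj2 : ∀ i, Disjoint (A i) Aend)
    (hcover : ∀ v : Fin N, v ∈ Aend ∨ ∃ i, v ∈ A i)
    (hreg : ∀ i, PairPReg χ true (1 / 2) ε (A i) Finset.univ)
    (hsmall : (Aend.card : ℝ) ≤ ε * N) :
    Quasirandom χ θ :=
  quasirandom_of_partition_general N χ θ ε hε0 hεθ ℓ A Aend hdisj hcover hreg hsmall
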